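/- arXiv:1603.08162 — 2 statements merged into one kernel-verified Lean document; each statement's English description precedes it below -/
import Mathlib

section
/- For α, β > -1 and m ≥ 1, the Jacobi polynomials P_m^{(α+1,β)} and P_m^{(α,β+1)} have no common zeros. -/
open Real MeasureTheory

noncomputable def genBinom (a : ℝ) (k : ℕ) : ℝ :=
  (∏ i ∈ Finset.range k, (a - i)) / (Nat.factorial k : ℝ)

/-- The Jacobi polynomial `P_m^{(α,β)}` evaluated at `x`, via the standard
explicit formula `P_m^{(α,β)}(x) = ∑_{s=0}^m C(m+α, m-s) C(m+β, s) ((x-1)/2)^s ((x+1)/2)^{m-s}`. -/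
noncomputable def jacobiP (m : ℕ) (α β x : ℝ) : ℝ :=
  ∑ s ∈ Finset.range (m + 1),
    genBinom (α + m) (m - s) * genBinom (β + m) s * ((x - 1) / 2) ^ s * ((x + 1) / 2) ^ (m - s)

lemma genBinom_zero (a : ℝ) : genBinom a 0 = 1 := by
  simp [genBinom]

lemma genBinom_succ (a : ℝ) (k : ℕ) :
    genBinom a (k + 1) = genBinom a k * (a - k) / (k + 1) := by
  have hk : (Nat.factorial k : ℝ) ≠ 0 := Nat.cast_ne_zero.2 (Nat.factorial_ne_zero k)
  have hk1 : ((k:ℝ) + 1) ≠ 0 := by positivity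
  unfold genBinom
  rw [Finset.prod_range_succ, Nat.factorial_succ]
  push_cast
  rw [div_mul_eq_mul_div, div_div, mul_comm ((k:ℝ) + 1)]

lemma genBinom_succ_left (a : ℝ) (k : ℕ) :
    genBinom (a + 1) (k + 1) = (a + 1) * genBinom a k / (k + 1) := by
  have hk : (Nat.factorial k : ℝ) ≠ 0 := Nat.cast_ne_zero.2 (Nat.factorial_ne_zero k)
  have hk1 : ((k:ℝ) + 1) ≠ 0 := by positivity
  unfold genBinom
  rw [Finset.prod_range_succ', Nat.factorial_succ]
  have h : ∀ i ∈ Finset.range k, (a + 1 - (↑(i + 1) : ℝ)) = a - i := by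
    intro i _; push_cast; ring
  rw [Finset.prod_congr rfl h]
  push_cast
  field_simp
  ring

lemma pascal (a : ℝ) (k : ℕ) :
    genBinom (a + 1) (k + 1) = genBinom a (k + 1) + genBinom a k := by
  have hk1 : ((k:ℝ) + 1) ≠ 0 := by positivity
  rw [genBinom_succ_left, genBinom_succ]
  field_simp
  ring

/-- Coefficient identity behind `(1-x)P^{(α+1,β)} + (1+x)P^{(α,β+1)} = 2P^{(α,β)}`. -/
lemma coeff1 (a b : ℝ) (j k : ℕ) :
    genBinom a k * genBinom (b + 1) (j + 1) - genBinom (a + 1) (k + 1) * genBinom b j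
      = genBinom a k * genBinom b (j + 1) - genBinom a (k + 1) * genBinom b j := by
  rw [pascal, pascal]
  ring

/-- Middle coefficient identity for the contiguous relation R3 (here `n = j+k+2`). -/
lemma coeffR3_mid (a b : ℝ) (j k : ℕ) :
    (a + b + 1) * (genBinom a (k + 1) * genBinom b (j + 1))
      = (a + b + 1 - ((j:ℝ) + k + 2)) * (genBinom (a + 1) (k + 1) * genBinom b (j + 1))
        - b * (genBinom a k * genBinom (b - 1) (j + 1)
            - genBinom a (k + 1) * genBinom (b - 1) j) := by
  have hk1 : ((k:ℝ) + 1) ≠ 0 := by positivity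
  have hj1 : ((j:ℝ) + 1) ≠ 0 := by positivity
  have e3 : genBinom b (j + 1) = b * genBinom (b - 1) j / ((j:ℝ) + 1) := by
    have h := genBinom_succ_left (b - 1) j
    rw [sub_add_cancel] at h
    rw [h]
  rw [genBinom_succ a k, genBinom_succ_left a k, e3, genBinom_succ (b - 1) j]
  field_simp
  ring

/-- Coefficient identity for R3 at `s = 0` (here `n = k+1`). -/
lemma coeffR3_s0 (a b : ℝ) (k : ℕ) :
    (a + b + 1) * genBinom a (k + 1)
      = (a + b + 1 - ((k:ℝ) + 1)) * genBinom (a + 1) (k + 1) - b * genBinom a k := by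
  have hk1 : ((k:ℝ) + 1) ≠ 0 := by positivity
  rw [genBinom_succ a k, genBinom_succ_left a k]
  field_simp
  ring

/-- Coefficient identity for R3 at `s = n` (here `n = j+1`). -/
lemma coeffR3_sn (a b : ℝ) (j : ℕ) :
    (a + b + 1) * genBinom b (j + 1)
      = (a + b + 1 - ((j:ℝ) + 1)) * genBinom b (j + 1) + b * genBinom (b - 1) j := by
  have hj1 : ((j:ℝ) + 1) ≠ 0 := by positivity
  have e3 : genBinom b (j + 1) = b * genBinom (b - 1) j / ((j:ℝ) + 1) := by
    have h := genBinom_succ_left (b - 1) j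
    rw [sub_add_cancel] at h
    rw [h]
  rw [e3]
  field_simp
  ring

lemma jacobiP_zero (α β x : ℝ) : jacobiP 0 α β x = 1 := by
  simp [jacobiP, genBinom]

/-- Multiplying by `u = (x-1)/2` shifts the index. -/
lemma jacobiP_mul_u (n : ℕ) (α β x : ℝ) :
    (x - 1) / 2 * jacobiP n α β x
      = ∑ s ∈ Finset.range (n + 2),
          (if s = 0 then 0 else genBinom (α + n) (n - (s - 1)) * genBinom (β + n) (s - 1))
            * ((x - 1) / 2) ^ s * ((x + 1) / 2) ^ (n + 1 - s) := by
  rw [jacobiP, Finset.mul_sum, eq_comm, Finset.sum_range_succ']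
  simp only [Nat.succ_ne_zero, if_false, Nat.add_sub_cancel, Nat.succ_sub_succ,
    reduceIte, zero_mul, add_zero, Nat.sub_zero]
  apply Finset.sum_congr rfl
  intro s _
  ring

/-- Writing `jacobiP n` as a sum with exponents at level `n+1` (uses `v - u = 1`). -/
lemma jacobiP_shift (n : ℕ) (α β x : ℝ) :
    jacobiP n α β x
      = ∑ s ∈ Finset.range (n + 2),
          ((if s ≤ n then genBinom (α + n) (n - s) * genBinom (β + n) s else 0)
            - if s = 0 then 0 else genBinom (α + n) (n - (s - 1)) * genBinom (β + n) (s - 1))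
            * ((x - 1) / 2) ^ s * ((x + 1) / 2) ^ (n + 1 - s) := by
  rw [jacobiP, eq_comm]
  have split : ∀ s ∈ Finset.range (n + 2),
      ((if s ≤ n then genBinom (α + n) (n - s) * genBinom (β + n) s else 0)
            - if s = 0 then 0 else genBinom (α + n) (n - (s - 1)) * genBinom (β + n) (s - 1))
            * ((x - 1) / 2) ^ s * ((x + 1) / 2) ^ (n + 1 - s)
        = (if s ≤ n then genBinom (α + n) (n - s) * genBinom (β + n) s else 0)
            * ((x - 1) / 2) ^ s * ((x + 1) / 2) ^ (n + 1 - s)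
          - (if s = 0 then 0 else genBinom (α + n) (n - (s - 1)) * genBinom (β + n) (s - 1))
            * ((x - 1) / 2) ^ s * ((x + 1) / 2) ^ (n + 1 - s) := by
    intro s _; ring
  rw [Finset.sum_congr rfl split, Finset.sum_sub_distrib]
  have h1 : ∑ s ∈ Finset.range (n + 2),
      (if s ≤ n then genBinom (α + n) (n - s) * genBinom (β + n) s else 0)
        * ((x - 1) / 2) ^ s * ((x + 1) / 2) ^ (n + 1 - s)
      = ∑ s ∈ Finset.range (n + 1),
          genBinom (α + n) (n - s) * genBinom (β + n) s
            * ((x - 1) / 2) ^ s * ((x + 1) / 2) ^ (n + 1 - s) := by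
    rw [Finset.sum_range_succ]
    simp only [Nat.lt_irrefl, Nat.not_succ_le_self, if_false, zero_mul, add_zero]
    apply Finset.sum_congr rfl
    intro s hs
    rw [if_pos (Nat.lt_succ_iff.mp (Finset.mem_range.mp hs))]
  have h2 : ∑ s ∈ Finset.range (n + 2),
      (if s = 0 then 0 else genBinom (α + n) (n - (s - 1)) * genBinom (β + n) (s - 1))
        * ((x - 1) / 2) ^ s * ((x + 1) / 2) ^ (n + 1 - s)
      = ∑ s ∈ Finset.range (n + 1),
          genBinom (α + n) (n - s) * genBinom (β + n) s
            * ((x - 1) / 2) ^ (s + 1) * ((x + 1) / 2) ^ (n - s) := by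
    rw [Finset.sum_range_succ']
    simp only [Nat.succ_ne_zero, if_false, Nat.add_sub_cancel, Nat.succ_sub_succ,
      reduceIte, zero_mul, add_zero, Nat.sub_zero]
  rw [h1, h2, ← Finset.sum_sub_distrib]
  apply Finset.sum_congr rfl
  intro s hs
  have hsn : s ≤ n := Nat.lt_succ_iff.mp (Finset.mem_range.mp hs)
  have hpow : n + 1 - s = (n - s) + 1 := by omega
  rw [hpow, pow_succ]
  have hv : (x + 1) / 2 = (x - 1) / 2 + 1 := by ring
  nth_rewrite 2 [hv]
  ring

lemma jacobiP_mul_v (n : ℕ) (α β x : ℝ) :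
    (x + 1) / 2 * jacobiP n α β x
      = ∑ s ∈ Finset.range (n + 2),
          (if s ≤ n then genBinom (α + n) (n - s) * genBinom (β + n) s else 0)
            * ((x - 1) / 2) ^ s * ((x + 1) / 2) ^ (n + 1 - s) := by
  rw [jacobiP, Finset.mul_sum, eq_comm, Finset.sum_range_succ]
  simp only [Nat.not_succ_le_self, if_false, zero_mul, add_zero]
  apply Finset.sum_congr rfl
  intro s hs
  have hsn : s ≤ n := Nat.lt_succ_iff.mp (Finset.mem_range.mp hs)
  rw [if_pos hsn, show n + 1 - s = (n - s) + 1 from by omega, pow_succ]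
  ring

lemma I1 (n : ℕ) (α β x : ℝ) :
    2 * jacobiP n α β x
      = (1 - x) * jacobiP n (α + 1) β x + (1 + x) * jacobiP n α (β + 1) x := by
  have h1 : (1 - x) * jacobiP n (α + 1) β x
      = -2 * ((x - 1) / 2 * jacobiP n (α + 1) β x) := by ring
  have h2 : (1 + x) * jacobiP n α (β + 1) x
      = 2 * ((x + 1) / 2 * jacobiP n α (β + 1) x) := by ring
  rw [h1, h2, jacobiP_mul_u n (α + 1) β x, jacobiP_mul_v n α (β + 1) x,
    jacobiP_shift n α β x, Finset.mul_sum, Finset.mul_sum, Finset.mul_sum,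
    ← Finset.sum_add_distrib]
  apply Finset.sum_congr rfl
  intro s hs
  have hs2 : s < n + 2 := Finset.mem_range.mp hs
  rcases Nat.eq_zero_or_pos s with h0 | hpos
  · subst h0
    simp only [Nat.zero_le, if_pos, reduceIte, Nat.sub_zero, genBinom_zero]
    ring
  · obtain ⟨j, rfl⟩ : ∃ j, s = j + 1 := ⟨s - 1, by omega⟩
    by_cases hsn : j + 1 ≤ n
    · obtain ⟨k, rfl⟩ : ∃ k, n = j + k + 1 := ⟨n - j - 1, by omega⟩
      have e1 : j + k + 1 - (j + 1) = k := by omega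
      have e2 : j + k + 1 - (j + 1 - 1) = k + 1 := by omega
      have e3 : j + 1 - 1 = j := rfl
      have e4 : j + k + 1 + 1 - (j + 1) = k + 1 := by omega
      have e5 : j + k + 1 - j = k + 1 := by omega
      simp only [hsn, Nat.succ_ne_zero, ite_true, ite_false, if_true, if_false, e1, e2, e3, e4, e5]
      have ea : α + 1 + (↑(j + k + 1) : ℝ) = (α + ↑(j + k + 1)) + 1 := by ring
      have eb : β + 1 + (↑(j + k + 1) : ℝ) = (β + ↑(j + k + 1)) + 1 := by ring
      rw [ea, eb]
      linear_combination (-2 * ((x - 1) / 2) ^ (j + 1) * ((x + 1) / 2) ^ (k + 1)) *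
        coeff1 (α + (↑(j + k + 1) : ℝ)) (β + (↑(j + k + 1) : ℝ)) j k
    · have e1 : n - (j + 1 - 1) = 0 := by omega
      have e1' : n - j = 0 := by omega
      have e2 : j + 1 - 1 = j := rfl
      simp only [hsn, Nat.succ_ne_zero, ite_true, ite_false, if_true, if_false, e1, e1', e2,
        genBinom_zero]
      ring

lemma R3 (N : ℕ) (α β x : ℝ) :
    (α + ((N:ℝ) + 1) + (β + ((N:ℝ) + 1)) + 1) * jacobiP (N + 1) α β x
      = (α + ((N:ℝ) + 1) + (β + ((N:ℝ) + 1)) + 1 - ((N:ℝ) + 1)) * jacobiP (N + 1) (α + 1) β x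
        - (β + ((N:ℝ) + 1)) * jacobiP N (α + 1) β x := by
  rw [jacobiP_shift N (α + 1) β x]
  unfold jacobiP
  simp only [show N + 1 + 1 = N + 2 from rfl]
  rw [Finset.mul_sum, Finset.mul_sum, Finset.mul_sum, ← Finset.sum_sub_distrib]
  apply Finset.sum_congr rfl
  intro s hs
  have hs2 : s < N + 2 := Finset.mem_range.mp hs
  push_cast
  rcases Nat.eq_zero_or_pos s with h0 | hpos
  · subst h0
    simp only [Nat.zero_le, ite_true, ite_false, if_true, if_false, reduceIte, Nat.sub_zero,
      genBinom_zero]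
    have r1 : α + 1 + ((N:ℝ) + 1) = (α + ((N:ℝ) + 1)) + 1 := by ring
    have r2 : α + 1 + (N:ℝ) = α + ((N:ℝ) + 1) := by ring
    rw [r1, r2]
    linear_combination (((x + 1) / 2) ^ (N + 1)) *
      coeffR3_s0 (α + ((N:ℝ) + 1)) (β + ((N:ℝ) + 1)) N
  · obtain ⟨j, rfl⟩ : ∃ j, s = j + 1 := ⟨s - 1, by omega⟩
    by_cases hsn : j + 1 ≤ N
    · obtain ⟨k, hk⟩ : ∃ k, N = j + k + 1 := ⟨N - j - 1, by omega⟩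
      have eA : N + 1 - (j + 1) = k + 1 := by omega
      have eB : N - (j + 1) = k := by omega
      have eC : j + 1 - 1 = j := rfl
      have eD : N - j = k + 1 := by omega
      simp only [hsn, Nat.succ_ne_zero, ite_true, ite_false, if_true, if_false, eA, eB, eC, eD]
      have hc : (N:ℝ) = (j:ℝ) + k + 1 := by rw [hk]; push_cast; ring
      rw [hc]
      have r1 : α + 1 + ((j:ℝ) + k + 1 + 1) = (α + ((j:ℝ) + k + 1 + 1)) + 1 := by ring
      have r2 : α + 1 + ((j:ℝ) + k + 1) = α + ((j:ℝ) + k + 1 + 1) := by ring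
      have r3 : β + ((j:ℝ) + k + 1) = (β + ((j:ℝ) + k + 1 + 1)) - 1 := by ring
      rw [r1, r2, r3]
      linear_combination (((x - 1) / 2) ^ (j + 1) * ((x + 1) / 2) ^ (k + 1)) *
        coeffR3_mid (α + ((j:ℝ) + k + 1 + 1)) (β + ((j:ℝ) + k + 1 + 1)) j k
    · have hjN : j = N := by omega
      subst hjN
      have eC : j + 1 - 1 = j := rfl
      have eD : j - j = 0 := by omega
      have eE : j + 1 - (j + 1) = 0 := by omega
      simp only [hsn, Nat.succ_ne_zero, ite_true, ite_false, if_true, if_false, eC, eD, eE,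
        genBinom_zero]
      have r3 : β + (j:ℝ) = (β + ((j:ℝ) + 1)) - 1 := by ring
      rw [r3]
      linear_combination (((x - 1) / 2) ^ (j + 1)) *
        coeffR3_sn (α + ((j:ℝ) + 1)) (β + ((j:ℝ) + 1)) j

lemma jacobi_symm (n : ℕ) (α β x : ℝ) :
    jacobiP n β α (-x) = (-1 : ℝ) ^ n * jacobiP n α β x := by
  unfold jacobiP
  rw [Finset.mul_sum, ← Finset.sum_range_reflect]
  apply Finset.sum_congr rfl
  intro j hj
  have hjn : j ≤ n := Nat.lt_succ_iff.mp (Finset.mem_range.mp hj)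
  have e0 : n + 1 - 1 - j = n - j := by omega
  have e1 : n - (n - j) = j := by omega
  rw [e0, e1]
  have h1 : (-x - 1) / 2 = -((x + 1) / 2) := by ring
  have h2 : (-x + 1) / 2 = -((x - 1) / 2) := by ring
  rw [h1, h2, neg_pow ((x + 1) / 2) (n - j), neg_pow ((x - 1) / 2) j]
  have e2 : (-1 : ℝ) ^ (n - j) * (-1 : ℝ) ^ j = (-1 : ℝ) ^ n := by
    rw [← pow_add, show n - j + j = n from by omega]
  linear_combination (genBinom (β + (n:ℝ)) j * genBinom (α + (n:ℝ)) (n - j)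
      * ((x + 1) / 2) ^ (n - j) * ((x - 1) / 2) ^ j) * e2

lemma R4 (N : ℕ) (α β x : ℝ) :
    (α + ((N:ℝ) + 1) + (β + ((N:ℝ) + 1)) + 1) * jacobiP (N + 1) α β x
      = (α + ((N:ℝ) + 1) + (β + ((N:ℝ) + 1)) + 1 - ((N:ℝ) + 1)) * jacobiP (N + 1) α (β + 1) x
        + (α + ((N:ℝ) + 1)) * jacobiP N α (β + 1) x := by
  have h := R3 N β α (-x)
  rw [jacobi_symm, jacobi_symm, jacobi_symm] at h
  rcases Nat.even_or_odd N with hN | hN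
  · rw [hN.neg_one_pow, hN.add_one.neg_one_pow] at h
    linear_combination -h
  · rw [hN.neg_one_pow, hN.add_one.neg_one_pow] at h
    linear_combination h

lemma no_common_zeros_aux :
    ∀ (n : ℕ) (α β : ℝ), -1 < α → -1 < β → ∀ t : ℝ,
      jacobiP n (α + 1) β t = 0 → jacobiP n α (β + 1) t = 0 → False := by
  intro n
  induction n with
  | zero =>
    intro α β _ _ t h1 _
    rw [jacobiP_zero] at h1
    exact one_ne_zero h1
  | succ N ih =>
    intro α β hα hβ t hA hB
    have hP : jacobiP (N + 1) α β t = 0 := by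
      have h := I1 (N + 1) α β t
      rw [hA, hB] at h
      linarith
    have hNc : (0:ℝ) ≤ (N:ℝ) := Nat.cast_nonneg N
    have hA' : jacobiP N (α + 1) β t = 0 := by
      have h := R3 N α β t
      rw [hP, hA] at h
      have hb : β + ((N:ℝ) + 1) ≠ 0 := by intro h0; nlinarith
      have : (β + ((N:ℝ) + 1)) * jacobiP N (α + 1) β t = 0 := by linarith
      exact (mul_eq_zero.mp this).resolve_left hb
    have hB' : jacobiP N α (β + 1) t = 0 := by
      have h := R4 N α β t
      rw [hP, hB] at h
      have ha : α + ((N:ℝ) + 1) ≠ 0 := by intro h0; nlinarith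
      have : (α + ((N:ℝ) + 1)) * jacobiP N α (β + 1) t = 0 := by linarith
      exact (mul_eq_zero.mp this).resolve_left ha
    exact ih α β hα hβ t hA' hB'

theorem no_common_zeros_of_jacobi
    (α β : ℝ) (hα : -1 < α) (hβ : -1 < β) (m : ℕ) (hm : 1 ≤ m) :
    ¬ ∃ t : ℝ, jacobiP m (α + 1) β t = 0 ∧ jacobiP m α (β + 1) t = 0 := by
  rintro ⟨t, h1, h2⟩
  exact no_common_zeros_aux m α β hα hβ t h1 h2
end

section
/- Let 0 < θ_1 < ... < θ_m < π and set s_{j,k} = cos((θ_j - θ_k)/2), t_{j,k} = cos((θ_j + θ_k)/2) for 1 ≤ j ≤ k ≤ m. Then the 4·m(m+1)/2 points (s_{j,k}, t_{j,k}), (t_{j,k}, s_{j,k}), (-s_{j,k}, -t_{j,k}), (-t_{j,k}, -s_{j,k}) are pairwise distinct, so the set X_m of all these points has cardinality 2m(m+1). -/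
open Real

private lemma aux_key {m : ℕ} {θ : Fin m → ℝ} (hmono : StrictMono θ)
    (hrange : ∀ j, θ j ∈ Set.Ioo 0 Real.pi) {j k : Fin m} (hjk : j ≤ k) :
    0 < Real.cos ((θ j - θ k) / 2) ∧
    Real.cos ((θ j + θ k) / 2) < Real.cos ((θ j - θ k) / 2) ∧
    -Real.cos ((θ j + θ k) / 2) < Real.cos ((θ j - θ k) / 2) := by
  obtain ⟨hj0, hjπ⟩ := hrange j
  obtain ⟨hk0, hkπ⟩ := hrange k
  have hπ := Real.pi_pos
  have hle : θ j ≤ θ k := hmono.le_iff_le.mpr hjk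
  have hev : Real.cos ((θ j - θ k) / 2) = Real.cos ((θ k - θ j) / 2) := by
    rw [show (θ j - θ k) / 2 = -((θ k - θ j) / 2) by ring, Real.cos_neg]
  rw [hev]
  have h1 : 0 < Real.cos ((θ k - θ j) / 2) :=
    Real.cos_pos_of_mem_Ioo ⟨by linarith, by linarith⟩
  have h2 : Real.cos ((θ j + θ k) / 2) < Real.cos ((θ k - θ j) / 2) :=
    Real.cos_lt_cos_of_nonneg_of_le_pi (by linarith) (by linarith) (by linarith)
  have h3 : Real.cos (π - (θ j + θ k) / 2) < Real.cos ((θ k - θ j) / 2) :=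
    Real.cos_lt_cos_of_nonneg_of_le_pi (by linarith) (by linarith) (by linarith)
  rw [Real.cos_pi_sub] at h3
  exact ⟨h1, h2, h3⟩

private lemma aux_rec {m : ℕ} {θ : Fin m → ℝ} (hmono : StrictMono θ)
    (hrange : ∀ j, θ j ∈ Set.Ioo 0 Real.pi) {j k j' k' : Fin m}
    (hjk : j ≤ k) (hjk' : j' ≤ k')
    (hs : Real.cos ((θ j - θ k) / 2) = Real.cos ((θ j' - θ k') / 2))
    (ht : Real.cos ((θ j + θ k) / 2) = Real.cos ((θ j' + θ k') / 2)) :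
    j = j' ∧ k = k' := by
  obtain ⟨hj0, hjπ⟩ := hrange j
  obtain ⟨hk0, hkπ⟩ := hrange k
  obtain ⟨hj0', hjπ'⟩ := hrange j'
  obtain ⟨hk0', hkπ'⟩ := hrange k'
  have hπ := Real.pi_pos
  have hle : θ j ≤ θ k := hmono.le_iff_le.mpr hjk
  have hle' : θ j' ≤ θ k' := hmono.le_iff_le.mpr hjk'
  have hev : ∀ x y : ℝ, Real.cos ((x - y) / 2) = Real.cos ((y - x) / 2) := fun x y => by
    rw [show (x - y) / 2 = -((y - x) / 2) by ring, Real.cos_neg]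
  rw [hev (θ j) (θ k), hev (θ j') (θ k')] at hs
  have ha : (θ k - θ j) / 2 = (θ k' - θ j') / 2 :=
    Real.injOn_cos ⟨by linarith, by linarith⟩ ⟨by linarith, by linarith⟩ hs
  have hb : (θ j + θ k) / 2 = (θ j' + θ k') / 2 :=
    Real.injOn_cos ⟨by linarith, by linarith⟩ ⟨by linarith, by linarith⟩ ht
  have h1 : θ j = θ j' := by linarith
  have h2 : θ k = θ k' := by linarith
  exact ⟨hmono.injective h1, hmono.injective h2⟩

theorem nodes_pairwise_distinct
    (m : ℕ) (hm : 1 ≤ m) (θ : Fin m → ℝ) (hmono : StrictMono θ)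
    (hrange : ∀ j, θ j ∈ Set.Ioo 0 Real.pi) :
    Set.ncard {p : ℝ × ℝ | ∃ j k : Fin m, j ≤ k ∧
        (p = (Real.cos ((θ j - θ k) / 2), Real.cos ((θ j + θ k) / 2)) ∨
         p = (Real.cos ((θ j + θ k) / 2), Real.cos ((θ j - θ k) / 2)) ∨
         p = (-Real.cos ((θ j - θ k) / 2), -Real.cos ((θ j + θ k) / 2)) ∨
         p = (-Real.cos ((θ j + θ k) / 2), -Real.cos ((θ j - θ k) / 2)))} =
      2 * m * (m + 1) := by
  classical
  set f : (Fin m × Fin m) × Fin 4 → ℝ × ℝ := fun x =>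
    if x.2 = 0 then (Real.cos ((θ x.1.1 - θ x.1.2) / 2), Real.cos ((θ x.1.1 + θ x.1.2) / 2))
    else if x.2 = 1 then (Real.cos ((θ x.1.1 + θ x.1.2) / 2), Real.cos ((θ x.1.1 - θ x.1.2) / 2))
    else if x.2 = 2 then (-Real.cos ((θ x.1.1 - θ x.1.2) / 2), -Real.cos ((θ x.1.1 + θ x.1.2) / 2))
    else (-Real.cos ((θ x.1.1 + θ x.1.2) / 2), -Real.cos ((θ x.1.1 - θ x.1.2) / 2)) with hf
  set P : Finset (Fin m × Fin m) := Finset.univ.filter (fun x => x.1 ≤ x.2) with hP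
  have hset : {p : ℝ × ℝ | ∃ j k : Fin m, j ≤ k ∧
        (p = (Real.cos ((θ j - θ k) / 2), Real.cos ((θ j + θ k) / 2)) ∨
         p = (Real.cos ((θ j + θ k) / 2), Real.cos ((θ j - θ k) / 2)) ∨
         p = (-Real.cos ((θ j - θ k) / 2), -Real.cos ((θ j + θ k) / 2)) ∨
         p = (-Real.cos ((θ j + θ k) / 2), -Real.cos ((θ j - θ k) / 2)))}
      = ↑((P ×ˢ (Finset.univ : Finset (Fin 4))).image f) := by
    ext p
    simp only [Set.mem_setOf_eq, Finset.coe_image, Set.mem_image, Finset.mem_coe,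
      Finset.mem_product, Finset.mem_univ, and_true, hP, Finset.mem_filter, true_and]
    constructor
    · rintro ⟨j, k, hjk, h | h | h | h⟩
      · exact ⟨((j, k), 0), hjk, by rw [h]; simp [hf]⟩
      · exact ⟨((j, k), 1), hjk, by rw [h]; simp [hf]⟩
      · exact ⟨((j, k), 2), hjk, by rw [h]; simp [hf]⟩
      · exact ⟨((j, k), 3), hjk, by rw [h]; simp [hf]⟩
    · rintro ⟨⟨⟨j, k⟩, i⟩, hjk, rfl⟩
      refine ⟨j, k, hjk, ?_⟩
      fin_cases i <;> simp [hf]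
  rw [hset, Set.ncard_coe_finset]
  have hinj : Set.InjOn f ↑(P ×ˢ (Finset.univ : Finset (Fin 4))) := by
    rintro ⟨⟨j, k⟩, i⟩ hx ⟨⟨j', k'⟩, i'⟩ hy hfe
    simp only [Finset.coe_product, Set.mem_prod, Finset.mem_coe, hP, Finset.mem_filter,
      Finset.mem_univ, true_and, and_true] at hx hy
    have hjk : j ≤ k := hx
    have hjk' : j' ≤ k' := hy
    obtain ⟨hs0, hst, hst'⟩ := aux_key hmono hrange hjk
    obtain ⟨hs0', hst2, hst2'⟩ := aux_key hmono hrange hjk'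
    have recov := aux_rec hmono hrange hjk hjk'
    fin_cases i <;> fin_cases i' <;>
      simp [hf, Prod.ext_iff] at hfe <;>
      obtain ⟨e1, e2⟩ := hfe <;>
      first
        | (exfalso; linarith)
        | (obtain ⟨rfl, rfl⟩ := recov (by linarith) (by linarith); rfl)
  rw [Finset.card_image_of_injOn hinj, Finset.card_product]
  simp only [Finset.card_univ, Fintype.card_fin]
  -- compute P.card
  have h1 : P.card + (Finset.univ.filter (fun x : Fin m × Fin m => ¬ x.1 ≤ x.2)).card = m * m := by
    rw [hP, Finset.card_filter_add_card_filter_not]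
    simp [Finset.card_univ]
  have h2 : (Finset.univ.filter (fun x : Fin m × Fin m => ¬ x.1 ≤ x.2)).card
      = (Finset.univ.filter (fun x : Fin m × Fin m => x.1 < x.2)).card := by
    apply Finset.card_bij (fun x _ => (x.2, x.1))
    · intro a ha
      simp only [Finset.mem_filter, Finset.mem_univ, true_and, not_le] at ha ⊢
      exact ha
    · intro a _ b _ h
      have h1' := congrArg Prod.fst h
      have h2' := congrArg Prod.snd h
      simp at h1' h2'
      exact Prod.ext h2' h1'
    · intro b hb
      simp only [Finset.mem_filter, Finset.mem_univ, true_and, not_le] at hb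
      exact ⟨(b.2, b.1), by
        simp only [Finset.mem_filter, Finset.mem_univ, true_and, not_le]; exact hb, by simp⟩
  have h3 : P.card = (Finset.univ.filter (fun x : Fin m × Fin m => x.1 < x.2)).card + m := by
    have hsplit : P = (Finset.univ.filter (fun x : Fin m × Fin m => x.1 < x.2))
        ∪ (Finset.univ.filter (fun x : Fin m × Fin m => x.1 = x.2)) := by
      rw [← Finset.filter_or, hP]
      apply Finset.filter_congr
      intro x _
      simp [le_iff_lt_or_eq]
    rw [hsplit, Finset.card_union_of_disjoint]
    · congr 1
      have himg : (Finset.univ.filter (fun x : Fin m × Fin m => x.1 = x.2))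
          = Finset.univ.image (fun j : Fin m => (j, j)) := by
        ext ⟨x1, x2⟩
        simp only [Finset.mem_filter, Finset.mem_univ, true_and, Finset.mem_image,
          Prod.mk.injEq]
        constructor
        · intro h; exact ⟨x1, rfl, h⟩
        · rintro ⟨j, rfl, rfl⟩; rfl
      rw [himg, Finset.card_image_of_injective, Finset.card_univ, Fintype.card_fin]
      intro a b hab
      exact (Prod.ext_iff.mp hab).1
    · rw [Finset.disjoint_filter]
      intro x _ hlt heq
      exact absurd heq (ne_of_lt hlt)
  have hfinal : 2 * P.card = m * (m + 1) := by
    have := h1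
    rw [h2] at this
    nlinarith [h3]
  nlinarith [hfinal]
end
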